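/- On the Cartwright–Steger surface, in the orthogonal basis K, E₁−E₂, D of NS/tor with K² = 9, (E₁−E₂)² = −16, D² = −9, a divisor class B with B·K = 2, B·B = 0, and B·F = n (where F ≡ 4K − 3(E₁−E₂)) must have coefficients a = 2/9, 6b = n/8 − 1, and c = ±(1/36)√((16−n)n); rationality of c forces n ∈ {0, 8, 16}. -/
import Mathlib

lemma stmt15_aux (q : ℚ) (m : ℤ) (h : q ^ 2 = (m : ℚ)) : ∃ y : ℤ, q = (y : ℚ) := by
  by_contra hc
  push_neg at hc
  have hirr : Irrational (q : ℝ) := by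
    apply irrational_nrt_of_notint_nrt 2 m
    · rw [show ((m:ℝ)) = ((m:ℚ):ℝ) by push_cast; ring, ← h]; push_cast; ring
    · rintro ⟨y, hy⟩
      exact hc y (by exact_mod_cast hy)
    · norm_num
  exact (Rat.not_irrational q) hirr

/-- Appendix II: on the Cartwright–Steger surface, in the orthogonal basis
`K`, `E = E₁ − E₂`, `D` of `NS/tor` with `K² = 9`, `E² = −16`, `D² = −9`,
a class `B = aK + bE + cD` with `B·K = 2`, `B·B = 0`, `B·F = n` where
`F = 4K − 3E`, satisfies `a = 2/9`, `6b = n/8 − 1`,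
`(36c)² = (16 − n)n`; rationality of `c` forces `n ∈ {0, 8, 16}`. -/
theorem stmt15 (V : Type*) [AddCommGroup V] [Module ℚ V]
    (inter : V →ₗ[ℚ] V →ₗ[ℚ] ℚ)
    (hsymm : ∀ x y : V, inter x y = inter y x)
    (K E D B F : V) (a b c : ℚ) (n : ℕ)
    (hKK : inter K K = 9) (hEE : inter E E = -16) (hDD : inter D D = -9)
    (hKE : inter K E = 0) (hKD : inter K D = 0) (hED : inter E D = 0)
    (hF : F = (4 : ℚ) • K - (3 : ℚ) • E)
    (hB : B = a • K + b • E + c • D)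
    (hBK : inter B K = 2) (hBB : inter B B = 0)
    (hBF : inter B F = (n : ℚ)) :
    a = 2 / 9 ∧ 6 * b = (n : ℚ) / 8 - 1 ∧
      (36 * c) ^ 2 = (16 - (n : ℚ)) * n ∧ (n = 0 ∨ n = 8 ∨ n = 16) := by
  have hEK : inter E K = 0 := by rw [hsymm]; exact hKE
  have hDK : inter D K = 0 := by rw [hsymm]; exact hKD
  have hDE : inter D E = 0 := by rw [hsymm]; exact hED
  simp only [hB, hF, map_add, map_sub, map_smul, LinearMap.add_apply,
    LinearMap.sub_apply, LinearMap.smul_apply, smul_eq_mul,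
    hKK, hEE, hDD, hKE, hKD, hED, hEK, hDK, hDE] at hBK hBB hBF
  have ha : a = 2 / 9 := by linarith
  have hb : 6 * b = (n : ℚ) / 8 - 1 := by linarith
  have hc : (36 * c) ^ 2 = (16 - (n : ℚ)) * n := by nlinarith [hBB, hb, ha]
  refine ⟨ha, hb, hc, ?_⟩
  obtain ⟨y, hy⟩ := stmt15_aux (36 * c) ((16 - (n : ℤ)) * n) (by push_cast; linarith [hc])
  have hyn : (y : ℚ) ^ 2 = (16 - (n : ℚ)) * n := by rw [← hy]; exact hc
  have hn16 : (n : ℤ) ≤ 16 := by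
    by_contra hgt
    push_neg at hgt
    have : (0 : ℚ) ≤ (36 * c) ^ 2 := sq_nonneg _
    have hq : (16 : ℚ) < (n : ℚ) := by exact_mod_cast hgt
    nlinarith [Nat.cast_nonneg (α := ℚ) n]
  have hyz : y ^ 2 = (16 - (n : ℤ)) * n := by exact_mod_cast hyn
  have hn16' : n ≤ 16 := by exact_mod_cast hn16
  have hy8 : y ^ 2 ≤ 64 := by nlinarith [sq_nonneg ((n : ℤ) - 8), Int.ofNat_nonneg n]
  have hyb : -8 ≤ y ∧ y ≤ 8 := by constructor <;> nlinarith
  obtain ⟨hy1, hy2⟩ := hyb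
  interval_cases n <;> interval_cases y <;> omega
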